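/- Every complete metric space that is strictly ∞-convex and nearly uniformly convex is contractible. -/

import Mathlib

open Filter Topology Metric Set MeasureTheory
open scoped ENNReal

section Defs

variable (X : Type) [MetricSpace X]

/-- `m` is a midpoint of `x` and `y`. -/
def IsMidpoint {X : Type} [MetricSpace X] (x y m : X) : Prop :=
  dist x m = dist x y / 2 ∧ dist y m = dist x y / 2

/-- `(X,d)` admits midpoints. -/
def AdmitsMidpoints : Prop := ∀ x y : X, ∃ m, IsMidpoint x y m

/-- The `p`-mean of two nonnegative reals, `p ∈ [1,∞]`. -/
noncomputable def pMean (p : ℝ≥0∞) (a b : ℝ) : ℝ :=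
  if p = ∞ then max a b else ((a ^ p.toReal + b ^ p.toReal) / 2) ^ (1 / p.toReal)

/-- `p`-convexity. -/
def PConvex (p : ℝ≥0∞) : Prop :=
  AdmitsMidpoints X ∧ ∀ x y z m : X, IsMidpoint x y m →
    dist m z ≤ pMean p (dist x z) (dist y z)

/-- strict `p`-convexity. -/
def StrictlyPConvex (p : ℝ≥0∞) : Prop :=
  AdmitsMidpoints X ∧ ∀ x y z m : X, IsMidpoint x y m →
    (if p = 1 then |dist x z - dist y z| < dist x y else x ≠ y) →
    dist m z < pMean p (dist x z) (dist y z)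

/-- uniform `p`-convexity. -/
def UniformlyPConvex (p : ℝ≥0∞) : Prop :=
  AdmitsMidpoints X ∧ ∀ ε : ℝ, 0 < ε → ∃ ρ : ℝ, ρ ∈ Set.Ioo (0:ℝ) 1 ∧
    ∀ x y z m : X, IsMidpoint x y m →
      (if p = 1 then |dist x z - dist y z| + ε * pMean 1 (dist x z) (dist y z) < dist x y
        else ε * pMean p (dist x z) (dist y z) < dist x y) →
      dist m z ≤ (1 - ρ) * pMean p (dist x z) (dist y z)

/-- Busemann non-positive curvature condition. -/
def Busemann : Prop :=
  AdmitsMidpoints X ∧ ∀ x₀ x₁ y₀ y₁ xm ym : X,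
    IsMidpoint x₀ x₁ xm → IsMidpoint y₀ y₁ ym →
      dist xm ym ≤ (dist x₀ y₀ + dist x₁ y₁) / 2

/-- `γ` (restricted to `[0,1]`) is a geodesic from `x` to `y`. -/
def IsGeodesic {X : Type} [MetricSpace X] (γ : ℝ → X) (x y : X) : Prop :=
  γ 0 = x ∧ γ 1 = y ∧ ∀ s ∈ Set.Icc (0:ℝ) 1, ∀ t ∈ Set.Icc (0:ℝ) 1,
    dist (γ s) (γ t) = |s - t| * dist x y

/-- A subset is (geodesically) convex if it contains all geodesics between its points. -/
def GConvex {X : Type} [MetricSpace X] (C : Set X) : Prop :=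
  ∀ x ∈ C, ∀ y ∈ C, ∀ γ : ℝ → X, IsGeodesic γ x y → ∀ t ∈ Set.Icc (0:ℝ) 1, γ t ∈ C

/-- The convex hull: the smallest convex set containing `A`. -/
def gConvexHull {X : Type} [MetricSpace X] (A : Set X) : Set X :=
  ⋂₀ {C : Set X | GConvex C ∧ A ⊆ C}

/-- `∞`-convexity. -/
def InftyConvex : Prop :=
  AdmitsMidpoints X ∧ ∀ x y z m : X, IsMidpoint x y m →
    dist m z ≤ max (dist x z) (dist y z)

/-- strict `∞`-convexity. -/
def StrictlyInftyConvex : Prop :=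
  AdmitsMidpoints X ∧ ∀ x y z m : X, IsMidpoint x y m → x ≠ y →
    dist m z < max (dist x z) (dist y z)

/-- uniform `∞`-convexity. -/
def UniformlyInftyConvex : Prop :=
  AdmitsMidpoints X ∧ ∀ ε : ℝ, 0 < ε → ∃ ρ : ℝ, ρ ∈ Set.Ioo (0:ℝ) 1 ∧
    ∀ x y z m : X, IsMidpoint x y m →
      ε * max (dist x z) (dist y z) < dist x y →
      dist m z ≤ (1 - ρ) * max (dist x z) (dist y z)

/-- `ρ` works as a modulus of nearly uniform convexity for the parameters `ε`, `R`:
for every infinite `ε`-separated family in a ball of radius `r ≤ R` around `y`, the ball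
`B_{(1-ρ)r}(y)` intersects the closed convex hull of the family. -/
def NUCModulus (ε R ρ : ℝ) : Prop :=
  ∀ (ι : Type) [Infinite ι], ∀ (x : ι → X) (y : X) (r : ℝ), r ≤ R →
    (∀ i j : ι, i ≠ j → ε ≤ dist (x i) (x j)) → (∀ i, dist (x i) y ≤ r) →
    (Metric.closedBall y ((1 - ρ) * r) ∩ closure (gConvexHull (Set.range x))).Nonempty

/-- Nearly uniform convexity. -/
def NearlyUniformlyConvex : Prop :=
  InftyConvex X ∧ ∀ R : ℝ, 0 < R → ∀ ε : ℝ, 0 < ε → ∃ ρ : ℝ, 0 < ρ ∧ NUCModulus X ε R ρ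

/-- Reflexivity: every decreasing directed family of nonempty bounded closed convex sets
has nonempty intersection. -/
def MetricReflexive : Prop :=
  ∀ (I : Type) [Nonempty I] [Preorder I] [IsDirected I (· ≤ ·)], ∀ C : I → Set X,
    (∀ i, (C i).Nonempty) → (∀ i, Bornology.IsBounded (C i)) → (∀ i, IsClosed (C i)) →
    (∀ i, GConvex (C i)) → (∀ i j : I, j ≤ i → C i ⊆ C j) → (⋂ i, C i).Nonempty

/-- The co-convex topology: the weakest topology containing all complements of closed
convex sets. -/
def coConvexTopology : TopologicalSpace X :=
  TopologicalSpace.generateFrom {U : Set X | ∃ C : Set X, IsClosed C ∧ GConvex C ∧ U = Cᶜ}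

/-- The set of limit points of the sequence `x` in the co-convex topology. -/
def coLim {X : Type} [MetricSpace X] (x : ℕ → X) : Set X :=
  {a : X | Filter.Tendsto x Filter.atTop (@nhds X (coConvexTopology X) a)}

/-- Countable reflexivity. -/
def CountableReflexive : Prop :=
  MetricReflexive X ∧ ∀ x : ℕ → X, (coLim x).Nonempty →
    ∃ φ : ℕ → ℕ, StrictMono φ ∧
      coLim x = ⋂ m : ℕ, closure (gConvexHull ((fun n => x (φ n)) '' Set.Ici m))

/-- Quasi-convexity: all sublevel sets are convex. -/
def GQuasiConvex {X : Type} [MetricSpace X] (f : X → ℝ) : Prop :=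
  ∀ c : ℝ, GConvex {x : X | f x ≤ c}

/-- Quasi-monotonicity: both quasi-convex and quasi-concave. -/
def GQuasiMonotone {X : Type} [MetricSpace X] (f : X → ℝ) : Prop :=
  GQuasiConvex f ∧ GQuasiConvex (fun x => -f x)

/-- The `p`-mean for real `p ∈ [1,∞)`. -/
noncomputable def pMeanR (p a b : ℝ) : ℝ := ((a ^ p + b ^ p) / 2) ^ (1 / p)

/-- `p`-convexity for real `p`. -/
def PConvexR (p : ℝ) : Prop :=
  AdmitsMidpoints X ∧ ∀ x y z m : X, IsMidpoint x y m →
    dist m z ≤ pMeanR p (dist x z) (dist y z)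

/-- strict `p`-convexity for real `p`. -/
def StrictlyPConvexR (p : ℝ) : Prop :=
  AdmitsMidpoints X ∧ ∀ x y z m : X, IsMidpoint x y m →
    (if p = 1 then |dist x z - dist y z| < dist x y else x ≠ y) →
    dist m z < pMeanR p (dist x z) (dist y z)

/-- uniform `p`-convexity for real `p`. -/
def UniformlyPConvexR (p : ℝ) : Prop :=
  AdmitsMidpoints X ∧ ∀ ε : ℝ, 0 < ε → ∃ ρ : ℝ, ρ ∈ Set.Ioo (0:ℝ) 1 ∧
    ∀ x y z m : X, IsMidpoint x y m →
      ε * pMeanR p (dist x z) (dist y z) < dist x y →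
      dist m z ≤ (1 - ρ) * pMeanR p (dist x z) (dist y z)

/-- `ω(z,(x_n)) = limsup_n d(z,x_n)`. -/
noncomputable def asymRadius {X : Type} [MetricSpace X] (x : ℕ → X) (z : X) : ℝ :=
  Filter.limsup (fun n => dist z (x n)) Filter.atTop

/-- `a` is the (unique) asymptotic center of the sequence `x`. -/
def IsAsymptoticCenter {X : Type} [MetricSpace X] (x : ℕ → X) (a : X) : Prop :=
  (∀ z : X, asymRadius x a ≤ asymRadius x z) ∧
  ∀ b : X, (∀ z : X, asymRadius x b ≤ asymRadius x z) → b = a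

/-- Weak sequential convergence: `a` is the asymptotic center of every subsequence. -/
def WeakSeqConv {X : Type} [MetricSpace X] (x : ℕ → X) (a : X) : Prop :=
  ∀ φ : ℕ → ℕ, StrictMono φ → IsAsymptoticCenter (fun n => x (φ n)) a

end Defs

/-!
Strict `∞`-convexity makes midpoints unique; let `M` be the midpoint map. If `xₙ → x` and
`yₙ → y`, the midpoints `M xₙ yₙ` are asymptotically approximate midpoints of `x` and `y`, and
nearly uniform convexity forbids an infinite separated family of approximate midpoints (its
closed convex hull would contain a point too close to both `x` and `y`). So `M xₙ yₙ` is totally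
bounded, every subsequential limit is a midpoint of `x` and `y`, and `M` is continuous. In a
complete space, iterated bisection with a continuous `M` gives geodesics `t ↦ γ(t, x)` from a base
point to every `x`, Lipschitz in `t` and continuous in `x`; sliding along them contracts the space.
-/

theorem tendsto_div_two_pow (c : ℝ) : Tendsto (fun n : ℕ => c / 2 ^ n) atTop (𝓝 0) :=
  tendsto_const_nhds.div_atTop (tendsto_pow_atTop_atTop_of_one_lt one_lt_two)

theorem IsClosed.Icc_subset_of_midpoint_mem {S : Set ℝ} (hS : IsClosed S) {a b : ℝ}
    (ha : a ∈ S) (hb : b ∈ S) (hmid : ∀ s ∈ S, ∀ u ∈ S, (s + u) / 2 ∈ S) : Icc a b ⊆ S := by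
  rintro t ⟨hat, htb⟩
  by_contra ht
  have hbdd : BddAbove (S ∩ Iic t) := ⟨t, fun _ h => h.2⟩
  have hbdd' : BddBelow (S ∩ Ici t) := ⟨t, fun _ h => h.2⟩
  -- The gap `(L, U)` of `S` around `t` would contain the midpoint of its endpoints.
  set L := sSup (S ∩ Iic t)
  set U := sInf (S ∩ Ici t)
  have hL : L ∈ S ∩ Iic t := (hS.inter isClosed_Iic).csSup_mem ⟨a, ha, hat⟩ hbdd
  have hU : U ∈ S ∩ Ici t := (hS.inter isClosed_Ici).csInf_mem ⟨b, hb, htb⟩ hbdd'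
  have hLt : L < t := lt_of_le_of_ne hL.2 fun h => ht (h ▸ hL.1)
  have htU : t < U := lt_of_le_of_ne hU.2 fun h => ht (h ▸ hU.1)
  rcases le_total ((L + U) / 2) t with h | h
  · linarith [le_csSup hbdd ⟨hmid L hL.1 U hU.1, h⟩]
  · linarith [csInf_le hbdd' ⟨hmid L hL.1 U hU.1, h⟩]

section Geodesic

variable {X : Type} [MetricSpace X]

theorem IsGeodesic.continuousOn {γ : ℝ → X} {x y : X} (hγ : IsGeodesic γ x y) :
    ContinuousOn γ (Icc 0 1) := by
  refine (LipschitzOnWith.of_dist_le_mul (K := nndist x y) fun s hs t ht => ?_).continuousOn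
  rw [hγ.2.2 s hs t ht, coe_nndist, Real.dist_eq, mul_comm]

theorem IsGeodesic.isMidpoint {γ : ℝ → X} {x y : X} (hγ : IsGeodesic γ x y) {s u : ℝ}
    (hs : s ∈ Icc (0 : ℝ) 1) (hu : u ∈ Icc (0 : ℝ) 1) :
    IsMidpoint (γ s) (γ u) (γ ((s + u) / 2)) := by
  have hm : (s + u) / 2 ∈ Icc (0 : ℝ) 1 := ⟨by linarith [hs.1, hu.1], by linarith [hs.2, hu.2]⟩
  have hd := hγ.2.2
  refine ⟨?_, ?_⟩
  · rw [hd s hs _ hm, hd s hs u hu, show s - (s + u) / 2 = (s - u) / 2 by ring, abs_div,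
      abs_two]
    ring
  · rw [hd u hu _ hm, hd s hs u hu, show u - (s + u) / 2 = -((s - u) / 2) by ring, abs_neg,
      abs_div, abs_two]
    ring

theorem InftyConvex.gConvex_closedBall (hX : InftyConvex X) (z : X) (r : ℝ) :
    GConvex (closedBall z r) := by
  intro x hx y hy γ hγ t ht
  have hS : IsClosed (Icc 0 1 ∩ γ ⁻¹' closedBall z r) :=
    hγ.continuousOn.preimage_isClosed_of_isClosed isClosed_Icc isClosed_closedBall
  have h0 : (0 : ℝ) ∈ Icc 0 1 ∩ γ ⁻¹' closedBall z r := ⟨left_mem_Icc.2 zero_le_one, by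
    rwa [mem_preimage, hγ.1]⟩
  have h1 : (1 : ℝ) ∈ Icc 0 1 ∩ γ ⁻¹' closedBall z r := ⟨right_mem_Icc.2 zero_le_one, by
    rwa [mem_preimage, hγ.2.1]⟩
  refine (hS.Icc_subset_of_midpoint_mem h0 h1 ?_ ht).2
  rintro s ⟨hs, hsz⟩ u ⟨hu, huz⟩
  refine ⟨⟨by linarith [hs.1, hu.1], by linarith [hs.2, hu.2]⟩, ?_⟩
  exact mem_closedBall.2 <| (hX.2 _ _ z _ (hγ.isMidpoint hs hu)).trans (max_le hsz huz)

theorem closure_gConvexHull_subset {A C : Set X} (hC : GConvex C) (hCc : IsClosed C)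
    (hAC : A ⊆ C) : closure (gConvexHull A) ⊆ C :=
  closure_minimal (fun _ hx => hx C ⟨hC, hAC⟩) hCc

theorem IsMidpoint.dist_right {x y m : X} (h : IsMidpoint x y m) : dist m y = dist x y / 2 := by
  rw [dist_comm]
  exact h.2

theorem IsMidpoint.symm {x y m : X} (h : IsMidpoint x y m) : IsMidpoint y x m := by
  rw [IsMidpoint, dist_comm y x]
  exact And.symm h

theorem StrictlyInftyConvex.isMidpoint_unique (hX : StrictlyInftyConvex X) {x y m m' : X}
    (hm : IsMidpoint x y m) (hm' : IsMidpoint x y m') : m = m' := by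
  by_contra hne
  -- A midpoint of `m` and `m'` would be strictly closer than `d(x, y) / 2` to both `x` and `y`.
  obtain ⟨c, hc⟩ := hX.1 m m'
  have hx := hX.2 m m' x c hc hne
  have hy := hX.2 m m' y c hc hne
  rw [dist_comm m x, dist_comm m' x, hm.1, hm'.1, max_self, dist_comm] at hx
  rw [dist_comm m y, dist_comm m' y, hm.2, hm'.2, max_self] at hy
  linarith [dist_triangle x c y]

end Geodesic

section Midpoints

variable {X : Type} [MetricSpace X]

theorem exists_infinite_pairwise_le_dist_of_not_totallyBounded {s : Set X}
    (hs : ¬TotallyBounded s) :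
    ∃ δ > 0, ∃ N ⊆ s, N.Infinite ∧ N.Pairwise fun p q => δ ≤ dist p q := by
  rw [Metric.totallyBounded_iff] at hs
  push Not at hs
  obtain ⟨δ, hδ, hcov⟩ := hs
  obtain ⟨N, hN⟩ := zorn_subset {N | N ⊆ s ∧ N.Pairwise fun p q => δ ≤ dist p q}
    fun c hcS hc => ⟨⋃₀ c, ⟨sUnion_subset fun N hN => (hcS hN).1,
      hc.pairwise_sUnion.2 fun N hN => (hcS hN).2⟩, fun _ => subset_sUnion_of_mem⟩
  refine ⟨δ, hδ, N, hN.prop.1, fun hfin => ?_, hN.prop.2⟩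
  -- A maximal `δ`-separated subset of `s` is a `δ`-net of `s`.
  obtain ⟨p, hps, hpN⟩ := not_subset.1 (hcov N hfin)
  simp only [mem_iUnion₂, mem_ball, not_exists, not_lt] at hpN
  have hp : p ∉ N := fun h => (hpN p h).not_gt (by rwa [dist_self])
  have hins : insert p N ∈ {N | N ⊆ s ∧ N.Pairwise fun p q => δ ≤ dist p q} :=
    ⟨insert_subset hps hN.prop.1,
      hN.prop.2.insert fun q hq _ => ⟨hpN q hq, dist_comm p q ▸ hpN q hq⟩⟩
  exact hp (hN.eq_of_subset hins (subset_insert p N) ▸ mem_insert p N)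

theorem NearlyUniformlyConvex.finite_of_pairwise_le_dist (hX : NearlyUniformlyConvex X)
    {x y : X} (hxy : x ≠ y) {δ : ℝ} (hδ : 0 < δ) :
    ∃ η > 0, ∀ N : Set X, (N.Pairwise fun p q => δ ≤ dist p q) →
      N ⊆ closedBall x (dist x y / 2 + η) → N ⊆ closedBall y (dist x y / 2 + η) → N.Finite := by
  set d := dist x y
  have hd : 0 < d := dist_pos.2 hxy
  obtain ⟨ρ, hρ, hmod⟩ := hX.2 d hd δ hδ
  set η := min (ρ * d / 8) (d / 2)
  have hη : 0 < η := lt_min (by positivity) (by positivity)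
  refine ⟨η, hη, fun N hsep hNx hNy => ?_⟩
  by_contra hinf
  have : Infinite N := Set.Infinite.to_subtype hinf
  obtain ⟨w, hwx, hwN⟩ := hmod N Subtype.val x (d / 2 + η)
    (by linarith [min_le_right (ρ * d / 8) (d / 2)])
    (fun i j hij => hsep i.2 j.2 (Subtype.val_injective.ne hij)) fun i => mem_closedBall.1 (hNx i.2)
  rw [Subtype.range_coe] at hwN
  have hwy := closure_gConvexHull_subset (hX.1.gConvex_closedBall y _) isClosed_closedBall hNy hwN
  rw [mem_closedBall] at hwy
  rw [mem_closedBall, dist_comm] at hwx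
  -- `η ≤ ρ d / 8` makes `(1 - ρ)(d/2 + η) + (d/2 + η) < d`.
  have htri : d ≤ dist x w + dist w y := dist_triangle x w y
  nlinarith [min_le_left (ρ * d / 8) (d / 2), mul_pos hρ hη]

theorem NearlyUniformlyConvex.totallyBounded_range_of_tendsto_dist
    (hX : NearlyUniformlyConvex X) {x y : X} {m : ℕ → X}
    (hx : Tendsto (fun n => dist (m n) x) atTop (𝓝 (dist x y / 2)))
    (hy : Tendsto (fun n => dist (m n) y) atTop (𝓝 (dist x y / 2))) :
    TotallyBounded (range m) := by
  rcases eq_or_ne x y with rfl | hxy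
  · rw [dist_self, zero_div] at hx
    exact (tendsto_iff_dist_tendsto_zero.2 hx).cauchySeq.totallyBounded_range
  by_contra hm
  obtain ⟨δ, hδ, N, hNm, hNinf, hsep⟩ := exists_infinite_pairwise_le_dist_of_not_totallyBounded hm
  obtain ⟨η, hη, hfin⟩ := hX.finite_of_pairwise_le_dist hxy hδ
  obtain ⟨K, hK⟩ := eventually_atTop.1 <| (hx.eventually_le_const (lt_add_of_pos_right _ hη)).and
    (hy.eventually_le_const (lt_add_of_pos_right _ hη))
  have hsub : N \ m '' Iio K ⊆
      closedBall x (dist x y / 2 + η) ∩ closedBall y (dist x y / 2 + η) := by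
    rintro _ ⟨hpN, hpK⟩
    obtain ⟨n, rfl⟩ := hNm hpN
    exact hK n (not_lt.1 fun h => hpK ⟨n, h, rfl⟩)
  exact hNinf.sdiff ((finite_Iio K).image m) <|
    hfin _ (hsep.mono sdiff_subset) (fun _ hp => (hsub hp).1) fun _ hp => (hsub hp).2

theorem tendsto_dist_of_isMidpoint {x y m : ℕ → X} {a b : X} (hx : Tendsto x atTop (𝓝 a))
    (hy : Tendsto y atTop (𝓝 b)) (hm : ∀ n, IsMidpoint (x n) (y n) (m n)) :
    Tendsto (fun n => dist (m n) a) atTop (𝓝 (dist a b / 2)) := by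
  refine ((hx.dist hy).div_const 2).congr_dist <|
    squeeze_zero (fun n => dist_nonneg) (fun n => ?_) (tendsto_iff_dist_tendsto_zero.1 hx)
  rw [← (hm n).1, Real.dist_eq, dist_comm (m n) a]
  exact abs_dist_sub_le (x n) a (m n)

theorem continuous_uncurry_of_isMidpoint [CompleteSpace X] (h1 : StrictlyInftyConvex X)
    (h2 : NearlyUniformlyConvex X) {M : X → X → X} (hM : ∀ a b, IsMidpoint a b (M a b)) :
    Continuous (Function.uncurry M) := by
  refine continuous_iff_seqContinuous.2 fun p q hpq => tendsto_of_subseq_tendsto fun ns hns => ?_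
  have hx := ((continuous_fst.tendsto q).comp hpq).comp hns
  have hy := ((continuous_snd.tendsto q).comp hpq).comp hns
  have hvx := tendsto_dist_of_isMidpoint hx hy fun n => hM _ _
  have hvy := tendsto_dist_of_isMidpoint hy hx fun n => (hM _ _).symm
  rw [dist_comm] at hvy
  have hcpt := (h2.totallyBounded_range_of_tendsto_dist hvx hvy).closure.isCompact_of_isClosed
    isClosed_closure
  obtain ⟨a, -, ψ, hψ, hva⟩ := hcpt.tendsto_subseq fun n => subset_closure (mem_range_self n)
  have hdist {z : X} (hz : Tendsto (fun n => dist (Function.uncurry M (p (ns n))) z) atTop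
      (𝓝 (dist q.1 q.2 / 2))) : dist z a = dist q.1 q.2 / 2 := by
    rw [dist_comm]
    exact tendsto_nhds_unique (hva.dist tendsto_const_nhds) (hz.comp hψ.tendsto_atTop)
  have ha : IsMidpoint q.1 q.2 a := ⟨hdist hvx, hdist hvy⟩
  rw [h1.isMidpoint_unique ha (hM q.1 q.2)] at hva
  exact ⟨ψ, hva⟩

end Midpoints

section Bisection

variable {X : Type} {M : X → X → X}

/-- For `0 ≤ t < 1`, `dyadicApprox M n t a b` is the point with parameter `⌊2ⁿ t⌋ / 2ⁿ` on the
path from `a` to `b` produced by `n` rounds of bisection with `M`. -/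
noncomputable def dyadicApprox (M : X → X → X) : ℕ → ℝ → X → X → X
  | 0, _, a, _ => a
  | n + 1, t, a, b =>
    if t < 1 / 2 then dyadicApprox M n (2 * t) a (M a b) else dyadicApprox M n (2 * t - 1) (M a b) b

theorem dyadicApprox_succ (n : ℕ) (t : ℝ) (a b : X) :
    dyadicApprox M (n + 1) t a b = if t < 1 / 2 then dyadicApprox M n (2 * t) a (M a b)
      else dyadicApprox M n (2 * t - 1) (M a b) b := rfl

theorem dyadicApprox_param_zero (n : ℕ) (a b : X) : dyadicApprox M n 0 a b = a := by
  induction n generalizing b with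
  | zero => rfl
  | succ n ih => simp [dyadicApprox_succ, ih]

variable [MetricSpace X]

theorem dist_dyadicApprox_left_le (hM : ∀ a b, IsMidpoint a b (M a b)) (n : ℕ) {t : ℝ}
    (ht₀ : 0 ≤ t) (ht₁ : t ≤ 1) (a b : X) : dist a (dyadicApprox M n t a b) ≤ t * dist a b := by
  induction n generalizing t a b with
  | zero => simpa [dyadicApprox] using mul_nonneg ht₀ dist_nonneg
  | succ n ih =>
    rw [dyadicApprox_succ]
    split_ifs with h
    · calc _ ≤ 2 * t * dist a (M a b) := ih (by linarith) (by linarith) _ _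
        _ = t * dist a b := by rw [(hM a b).1]; ring
    · calc _ ≤ dist a (M a b) + dist (M a b) (dyadicApprox M n (2 * t - 1) (M a b) b) :=
            dist_triangle _ _ _
        _ ≤ dist a (M a b) + (2 * t - 1) * dist (M a b) b := by
            gcongr; exact ih (by linarith) (by linarith) _ _
        _ = t * dist a b := by rw [(hM a b).1, (hM a b).dist_right]; ring

theorem dist_dyadicApprox_right_le (hM : ∀ a b, IsMidpoint a b (M a b)) (n : ℕ) {t : ℝ}
    (ht₀ : 0 ≤ t) (ht₁ : t ≤ 1) (a b : X) :
    dist (dyadicApprox M n t a b) b ≤ (1 - t) * dist a b + dist a b / 2 ^ n := by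
  induction n generalizing t a b with
  | zero => simpa [dyadicApprox] using mul_nonneg (sub_nonneg.2 ht₁) dist_nonneg
  | succ n ih =>
    rw [dyadicApprox_succ]
    split_ifs with h
    · calc _ ≤ dist (dyadicApprox M n (2 * t) a (M a b)) (M a b) + dist (M a b) b :=
            dist_triangle _ _ _
        _ ≤ ((1 - 2 * t) * dist a (M a b) + dist a (M a b) / 2 ^ n) + dist (M a b) b := by
            gcongr; exact ih (by linarith) (by linarith) _ _
        _ = _ := by rw [(hM a b).1, (hM a b).dist_right]; ring
    · calc _ ≤ (1 - (2 * t - 1)) * dist (M a b) b + dist (M a b) b / 2 ^ n :=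
            ih (by linarith) (by linarith) _ _
        _ = _ := by rw [(hM a b).dist_right]; ring

theorem dist_dyadicApprox_le_of_le (hM : ∀ a b, IsMidpoint a b (M a b)) (n : ℕ) {s t : ℝ}
    (hs₀ : 0 ≤ s) (hst : s ≤ t) (ht₁ : t ≤ 1) (a b : X) :
    dist (dyadicApprox M n s a b) (dyadicApprox M n t a b) ≤
      (t - s) * dist a b + dist a b / 2 ^ n := by
  induction n generalizing s t a b with
  | zero =>
    simp only [dyadicApprox, dist_self, pow_zero, div_one]
    exact add_nonneg (mul_nonneg (sub_nonneg.2 hst) dist_nonneg) dist_nonneg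
  | succ n ih =>
    rw [dyadicApprox_succ, dyadicApprox_succ]
    split_ifs with hs ht ht
    · calc _ ≤ (2 * t - 2 * s) * dist a (M a b) + dist a (M a b) / 2 ^ n :=
            ih (by linarith) (by linarith) (by linarith) _ _
        _ = _ := by rw [(hM a b).1]; ring
    · calc _ ≤ dist (dyadicApprox M n (2 * s) a (M a b)) (M a b)
            + dist (M a b) (dyadicApprox M n (2 * t - 1) (M a b) b) := dist_triangle _ _ _
        _ ≤ ((1 - 2 * s) * dist a (M a b) + dist a (M a b) / 2 ^ n)
            + (2 * t - 1) * dist (M a b) b :=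
            add_le_add (dist_dyadicApprox_right_le hM n (by linarith) (by linarith) _ _)
              (dist_dyadicApprox_left_le hM n (by linarith) (by linarith) _ _)
        _ = _ := by rw [(hM a b).1, (hM a b).dist_right]; ring
    · linarith
    · calc _ ≤ ((2 * t - 1) - (2 * s - 1)) * dist (M a b) b + dist (M a b) b / 2 ^ n :=
            ih (by linarith) (by linarith) (by linarith) _ _
        _ = _ := by rw [(hM a b).dist_right]; ring

theorem dist_dyadicApprox_succ_le (hM : ∀ a b, IsMidpoint a b (M a b)) (n : ℕ) (t : ℝ)
    (a b : X) : dist (dyadicApprox M n t a b) (dyadicApprox M (n + 1) t a b) ≤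
      dist a b / 2 / 2 ^ n := by
  induction n generalizing t a b with
  | zero =>
    rw [dyadicApprox_succ]
    split_ifs
    · simp only [dyadicApprox, dist_self]; positivity
    · simp [dyadicApprox, (hM a b).1]
  | succ n ih =>
    rw [dyadicApprox_succ (n + 1), dyadicApprox_succ n]
    split_ifs
    · calc _ ≤ dist a (M a b) / 2 / 2 ^ n := ih _ _ _
        _ = _ := by rw [(hM a b).1]; ring
    · calc _ ≤ dist (M a b) b / 2 / 2 ^ n := ih _ _ _
        _ = _ := by rw [(hM a b).dist_right]; ring

theorem continuous_dyadicApprox (hMc : Continuous (Function.uncurry M)) (n : ℕ) (t : ℝ) :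
    Continuous fun p : X × X => dyadicApprox M n t p.1 p.2 := by
  induction n generalizing t with
  | zero => exact continuous_fst
  | succ n ih =>
    simp only [dyadicApprox_succ]
    split_ifs
    · exact (ih _).comp (continuous_fst.prodMk hMc)
    · exact (ih _).comp (hMc.prodMk continuous_snd)

end Bisection

section MidpointGeodesic

variable {X : Type} [MetricSpace X] {M : X → X → X}

noncomputable def midpointGeodesic (M : X → X → X) (t : ℝ) (a b : X) : X :=
  haveI : Nonempty X := ⟨a⟩
  limUnder atTop fun n => dyadicApprox M n t a b

variable [CompleteSpace X]

theorem tendsto_dyadicApprox (hM : ∀ a b, IsMidpoint a b (M a b)) (t : ℝ) (a b : X) :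
    Tendsto (fun n => dyadicApprox M n t a b) atTop (𝓝 (midpointGeodesic M t a b)) :=
  (cauchySeq_of_le_geometric_two (dist_dyadicApprox_succ_le hM · t a b)).tendsto_limUnder

theorem dist_dyadicApprox_midpointGeodesic_le (hM : ∀ a b, IsMidpoint a b (M a b)) (n : ℕ)
    (t : ℝ) (a b : X) :
    dist (dyadicApprox M n t a b) (midpointGeodesic M t a b) ≤ dist a b / 2 ^ n :=
  dist_le_of_le_geometric_two_of_tendsto (dist_dyadicApprox_succ_le hM · t a b)
    (tendsto_dyadicApprox hM t a b) n

theorem midpointGeodesic_zero (hM : ∀ a b, IsMidpoint a b (M a b)) (a b : X) :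
    midpointGeodesic M 0 a b = a :=
  tendsto_nhds_unique (tendsto_dyadicApprox hM 0 a b) <| by
    simpa only [dyadicApprox_param_zero] using tendsto_const_nhds

theorem midpointGeodesic_one (hM : ∀ a b, IsMidpoint a b (M a b)) (a b : X) :
    midpointGeodesic M 1 a b = b := by
  refine tendsto_nhds_unique (tendsto_dyadicApprox hM 1 a b) <| tendsto_iff_dist_tendsto_zero.2 <|
    squeeze_zero (fun _ => dist_nonneg) (fun n => ?_) (tendsto_div_two_pow (dist a b))
  simpa using dist_dyadicApprox_right_le hM n zero_le_one le_rfl a b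

theorem dist_midpointGeodesic_le (hM : ∀ a b, IsMidpoint a b (M a b)) {s t : ℝ}
    (hs : s ∈ Icc (0 : ℝ) 1) (ht : t ∈ Icc (0 : ℝ) 1) (a b : X) :
    dist (midpointGeodesic M s a b) (midpointGeodesic M t a b) ≤ |t - s| * dist a b := by
  wlog hst : s ≤ t generalizing s t
  · rw [dist_comm, abs_sub_comm]
    exact this ht hs (le_of_not_ge hst)
  rw [abs_of_nonneg (sub_nonneg.2 hst)]
  have hlim := (tendsto_const_nhds (x := (t - s) * dist a b)).add (tendsto_div_two_pow (dist a b))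
  rw [add_zero] at hlim
  exact le_of_tendsto_of_tendsto' ((tendsto_dyadicApprox hM s a b).dist
    (tendsto_dyadicApprox hM t a b)) hlim fun n => dist_dyadicApprox_le_of_le hM n hs.1 hst ht.2 a b

theorem continuous_midpointGeodesic (hM : ∀ a b, IsMidpoint a b (M a b))
    (hMc : Continuous (Function.uncurry M)) (t : ℝ) (a : X) :
    Continuous (midpointGeodesic M t a) := by
  refine TendstoLocallyUniformly.continuous (F := fun n b => dyadicApprox M n t a b) ?_
    (Frequently.of_forall (f := atTop) fun n =>
      (continuous_dyadicApprox hMc n t).comp (continuous_const.prodMk continuous_id))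
  rw [Metric.tendstoLocallyUniformly_iff]
  intro ε hε b
  refine ⟨ball b 1, ball_mem_nhds b one_pos, ?_⟩
  filter_upwards [(tendsto_div_two_pow (dist a b + 1)).eventually_lt_const hε] with n hn c hc
  rw [dist_comm]
  calc _ ≤ dist a c / 2 ^ n := dist_dyadicApprox_midpointGeodesic_le hM n t a c
    _ ≤ (dist a b + 1) / 2 ^ n := by
        gcongr
        linarith [dist_triangle a b c, mem_ball'.1 hc]
    _ < ε := hn

theorem continuous_midpointGeodesic_unitInterval (hM : ∀ a b, IsMidpoint a b (M a b))
    (hMc : Continuous (Function.uncurry M)) (a : X) :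
    Continuous fun p : unitInterval × X => midpointGeodesic M p.1 a p.2 := by
  refine continuous_iff_continuousAt.2 fun ⟨τ, b⟩ => ?_
  have hLip : ∀ c ∈ ball b 1, LipschitzOnWith (Real.toNNReal (dist a b + 1))
      (fun s : unitInterval => midpointGeodesic M s a c) univ := by
    intro c hc
    refine LipschitzOnWith.of_dist_le_mul fun s _ u _ => ?_
    rw [Real.coe_toNNReal _ (by positivity), Subtype.dist_eq, Real.dist_eq, abs_sub_comm, mul_comm]
    calc _ ≤ |(u : ℝ) - s| * dist a c := dist_midpointGeodesic_le hM s.2 u.2 a c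
      _ ≤ _ := by
          gcongr
          linarith [dist_triangle a b c, mem_ball'.1 hc]
  exact (continuousOn_prod_of_continuousOn_lipschitzOnWith
    (fun p : unitInterval × X => midpointGeodesic M p.1 a p.2) _
    (fun s _ => (continuous_midpointGeodesic hM hMc s a).continuousOn) hLip).continuousAt
    (prod_mem_nhds univ_mem (ball_mem_nhds b one_pos))

theorem contractibleSpace_of_continuous_midpoint [Nonempty X]
    (hM : ∀ a b, IsMidpoint a b (M a b)) (hMc : Continuous (Function.uncurry M)) :
    ContractibleSpace X := by
  obtain ⟨a⟩ := ‹Nonempty X›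
  rw [contractible_iff_id_nullhomotopic]
  exact ⟨a, ⟨ContinuousMap.Homotopy.symm
    { toFun := fun p => midpointGeodesic M p.1 a p.2
      continuous_toFun := continuous_midpointGeodesic_unitInterval hM hMc a
      map_zero_left := midpointGeodesic_zero hM a
      map_one_left := midpointGeodesic_one hM a }⟩⟩

end MidpointGeodesic

/-- Every complete, strictly `∞`-convex, nearly uniformly convex metric space
is contractible. -/
theorem strictly_nuc_contractible (X : Type) [MetricSpace X] [CompleteSpace X] [Nonempty X]
    (h1 : StrictlyInftyConvex X) (h2 : NearlyUniformlyConvex X) :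
    ContractibleSpace X := by
  choose M hM using h1.1
  exact contractibleSpace_of_continuous_midpoint hM (continuous_uncurry_of_isMidpoint h1 h2 hM)
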